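/- Let γ ∈ [0,2), d := 2(γ+1)/(2−γ), and let b be the γ-anti-tree over (X, m) with counting measure m ≡ 1 and intrinsic degree path metric ρ. Then there exists a constant C ≥ 1 such that for all x ∈ X, writing r_x := ρ(x,o): (i) C⁻¹ r^d ≤ #B_x(r) ≤ C r^d for all r ≥ max(1, r_x); and (ii) C⁻¹ r · r_x^{d−1} ≤ #B_x(r) ≤ C r · r_x^{d−1} for all r with 1 ≤ r ≤ r_x. -/

import Mathlib

/-!
On an anti-tree whose sphere sizes are positive and nondecreasing, every edge between `S_k` and
`S_{k+1}` has intrinsic length `w_k = Deg(S_{k+1})^{-1/2}`. The potential `W(n) = ∑_{k<n} w_k`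
changes by exactly the length of each edge, so `ρ(x, y) ≥ |W(|y|) - W(|x|)|`, with equality along
monotone paths whenever `|x| ≠ |y|`. Hence `B_x(r)` is, up to the sphere of `x`, the union of the
spheres `S_k` with `|W(k) - W(|x|)| ≤ r`.

For the `γ`-anti-tree `#S_k ≍ k^γ`, `w_k ≍ k^{-γ/2}` and `W(n) ≍ n^{1-γ/2}`. With `r_x = W(|x|)`
and `r ≥ 1`, the window of spheres in `B_x(r)` lies below level `≲ max(r, r_x)^{1/(1-γ/2)}` and has
width `≲ r · max(r, r_x)^{γ/(2-γ)}`, which bounds `#B_x(r) ≲ r · max(r, r_x)^{d-1}`. Conversely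
`B_x(r)` contains `≳ r^{1/(1-γ/2)}` spheres just above `x` (giving `≳ r^d`), and also `≳ r |x|^{γ/2}`
of them (giving `≳ r · r_x^{d-1}`). The two regimes of the theorem are the two values of the
maximum.
-/

open scoped BigOperators

/-- Vertex set of the anti-tree with sphere function `s`:
the `k`-th sphere has `s k` elements. -/
def AntiTree (s : ℕ → ℕ) : Type := Σ k : ℕ, Fin (s k)

namespace AntiTree

/-- Standard edge weights of the anti-tree: consecutive spheres are completely connected,
and there are no other edges. -/
def wt (s : ℕ → ℕ) (x y : AntiTree s) : ℝ :=
  if x.1 + 1 = y.1 ∨ y.1 + 1 = x.1 then 1 else 0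

/-- Weighted vertex degree with respect to the counting measure `m ≡ 1`. -/
noncomputable def Deg (s : ℕ → ℕ) (x : AntiTree s) : ℝ := ∑' y : AntiTree s, wt s x y

end AntiTree

/-- Intrinsic degree path (pseudo-)metric of a weighted graph `b` whose weighted degree
function is `D`:  `ρ(x,y)` is the infimum over finite paths from `x` to `y` of
`∑_j min(1/D(x_j), 1/D(x_{j+1}))^{1/2}`. -/
noncomputable def pathMetric {X : Type*} (b : X → X → ℝ) (D : X → ℝ) (x y : X) : ℝ :=
  sInf { L : ℝ | ∃ (k : ℕ) (p : ℕ → X), p 0 = x ∧ p k = y ∧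
    (∀ j < k, 0 < b (p j) (p (j + 1))) ∧
    L = ∑ j ∈ Finset.range k, Real.sqrt (min (1 / D (p j)) (1 / D (p (j + 1)))) }

/-- The intrinsic degree path metric of the anti-tree. -/
noncomputable def AntiTree.rho (s : ℕ → ℕ) : AntiTree s → AntiTree s → ℝ :=
  pathMetric (AntiTree.wt s) (AntiTree.Deg s)

/-- Closed balls with respect to the intrinsic degree path metric. -/
noncomputable def AntiTree.ball (s : ℕ → ℕ) (x : AntiTree s) (r : ℝ) : Set (AntiTree s) :=
  {y | AntiTree.rho s x y ≤ r}

/-- The sphere function of the `γ`-anti-tree: `s (k-1) = ⌊k ^ γ⌋` for `k ≥ 1`,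
i.e. `s k = ⌊(k+1) ^ γ⌋`. -/
noncomputable def gammaSphere (γ : ℝ) : ℕ → ℕ := fun k => ⌊((k : ℝ) + 1) ^ γ⌋₊

open Finset

theorem mul_rpow_sub_one_le_rpow_sub_rpow {p x : ℝ} (hp0 : 0 ≤ p) (hp1 : p ≤ 1)
    (hx : 1 ≤ x) : p * x ^ (p - 1) ≤ x ^ p - (x - 1) ^ p := by
  -- Bernoulli's inequality `(1 - x⁻¹) ^ p ≤ 1 - p x⁻¹`, multiplied by `x ^ p`
  have hx0 : 0 < x := by linarith
  have hinv : x⁻¹ ≤ 1 := inv_le_one_of_one_le₀ hx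
  have hsplit : (x - 1) ^ p = (1 + -x⁻¹) ^ p * x ^ p := by
    rw [← Real.mul_rpow (by linarith) hx0.le, add_mul, neg_mul, inv_mul_cancel₀ hx0.ne',
      one_mul, ← sub_eq_add_neg]
  have hbern := mul_le_mul_of_nonneg_right
    (rpow_one_add_le_one_add_mul_self (s := -x⁻¹) (by linarith) hp0 hp1)
    (by positivity : 0 ≤ x ^ p)
  rw [hsplit, Real.rpow_sub_one hx0.ne']
  have : (1 + p * -x⁻¹) * x ^ p = x ^ p - p * (x ^ p / x) := by ring
  linarith

theorem sum_range_rpow_sub_one_le {p : ℝ} (hp0 : 0 < p) (hp1 : p ≤ 1) (n : ℕ) :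
    ∑ k ∈ range n, ((k : ℝ) + 1) ^ (p - 1) ≤ (n : ℝ) ^ p / p := by
  rw [le_div_iff₀ hp0, sum_mul]
  calc ∑ k ∈ range n, ((k : ℝ) + 1) ^ (p - 1) * p
      ≤ ∑ k ∈ range n, (((k + 1 : ℕ) : ℝ) ^ p - (k : ℝ) ^ p) := sum_le_sum fun k _ => by
        have := mul_rpow_sub_one_le_rpow_sub_rpow hp0.le hp1 (x := (k : ℝ) + 1) (by simp)
        push_cast
        rw [add_sub_cancel_right] at this
        linarith
    _ = (n : ℝ) ^ p := by
        rw [sum_range_sub (fun k => (k : ℝ) ^ p), Nat.cast_zero, Real.zero_rpow hp0.ne', sub_zero]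

theorem sum_range_le_sum_Ico_add {f : ℕ → ℝ} (hf : Monotone f) (a j : ℕ) :
    ∑ k ∈ range j, f k ≤ ∑ k ∈ Ico a (a + j), f k := by
  rw [sum_Ico_eq_sum_range, Nat.add_sub_cancel_left]
  exact sum_le_sum fun k _ => hf (by omega)

theorem two_rpow_le_eight {e : ℝ} (he : e ≤ 3) : (2 : ℝ) ^ e ≤ 8 :=
  (Real.rpow_le_rpow_of_exponent_le (by norm_num) he).trans_eq (by norm_num)

theorem mul_rpow_sub_one_eq_rpow {r : ℝ} (hr : r ≠ 0) (d : ℝ) : r * r ^ (d - 1) = r ^ d := by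
  rw [Real.rpow_sub_one hr, mul_div_cancel₀ _ hr]

theorem inv_mul_le_and_le_mul_of_le {c C K f V : ℝ} (hc : 0 < c) (hf : 0 ≤ f)
    (hcK : c⁻¹ ≤ K) (hCK : C ≤ K) (hlow : c * f ≤ V) (hup : V ≤ C * f) :
    K⁻¹ * f ≤ V ∧ V ≤ K * f :=
  ⟨(mul_le_mul_of_nonneg_right (inv_le_of_inv_le₀ hc hcK) hf).trans hlow,
    hup.trans (mul_le_mul_of_nonneg_right hCK hf)⟩

section PathMetric

variable {X : Type*} {b : X → X → ℝ} {D : X → ℝ}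

noncomputable def stepLength (D : X → ℝ) (x y : X) : ℝ := √(min (1 / D x) (1 / D y))

def pathLengths (b : X → X → ℝ) (D : X → ℝ) (x y : X) : Set ℝ :=
  { L : ℝ | ∃ (k : ℕ) (p : ℕ → X), p 0 = x ∧ p k = y ∧
    (∀ j < k, 0 < b (p j) (p (j + 1))) ∧ L = ∑ j ∈ range k, stepLength D (p j) (p (j + 1)) }

theorem nonneg_of_mem_pathLengths {x y : X} {L : ℝ} (h : L ∈ pathLengths b D x y) :
    0 ≤ L := by
  obtain ⟨k, p, -, -, -, rfl⟩ := h
  exact sum_nonneg fun j _ => Real.sqrt_nonneg _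

theorem zero_mem_pathLengths (x : X) : 0 ∈ pathLengths b D x x :=
  ⟨0, fun _ => x, rfl, rfl, by simp, by simp⟩

theorem add_mem_pathLengths {x y z : X} {L : ℝ} (hxy : 0 < b x y)
    (h : L ∈ pathLengths b D y z) : stepLength D x y + L ∈ pathLengths b D x z := by
  obtain ⟨k, p, hp0, hpk, hpos, rfl⟩ := h
  refine ⟨k + 1, fun j => if j = 0 then x else p (j - 1), rfl, by simpa using hpk, ?_, ?_⟩
  · rintro (_ | j) hj
    · simpa [hp0] using hxy
    · simpa using hpos j (by omega)
  · rw [sum_range_succ']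
    simp [hp0, add_comm]

theorem mem_pathLengths_comm (hb : ∀ x y, b x y = b y x) {x y : X} {L : ℝ}
    (h : L ∈ pathLengths b D x y) : L ∈ pathLengths b D y x := by
  obtain ⟨k, p, hp0, hpk, hpos, rfl⟩ := h
  refine ⟨k, fun j => p (k - j), by simpa using hpk, by simpa using hp0, fun j hj => ?_, ?_⟩
  · dsimp only
    rw [show k - j = k - (j + 1) + 1 by omega, hb]
    exact hpos _ (by omega)
  · rw [← sum_range_reflect]
    refine sum_congr rfl fun j hj => ?_
    have := mem_range.1 hj
    rw [show k - 1 - j + 1 = k - j by omega, show k - 1 - j = k - (j + 1) by omega,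
      stepLength, stepLength, min_comm]

theorem pathMetric_le {x y : X} {L : ℝ} (h : L ∈ pathLengths b D x y) :
    pathMetric b D x y ≤ L :=
  csInf_le ⟨0, fun _ => nonneg_of_mem_pathLengths⟩ h

theorem pathMetric_nonneg (x y : X) : 0 ≤ pathMetric b D x y :=
  Real.sInf_nonneg fun _ => nonneg_of_mem_pathLengths

theorem pathMetric_self (x : X) : pathMetric b D x x = 0 :=
  (pathMetric_le (zero_mem_pathLengths x)).antisymm (pathMetric_nonneg x x)

theorem abs_sub_le_of_mem_pathLengths (f : X → ℝ)
    (hf : ∀ x y, 0 < b x y → |f y - f x| ≤ stepLength D x y) {x y : X} {L : ℝ}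
    (h : L ∈ pathLengths b D x y) : |f y - f x| ≤ L := by
  obtain ⟨k, p, rfl, rfl, hpos, rfl⟩ := h
  calc |f (p k) - f (p 0)| = |∑ j ∈ range k, (f (p (j + 1)) - f (p j))| := by
        rw [sum_range_sub (fun j => f (p j))]
    _ ≤ ∑ j ∈ range k, |f (p (j + 1)) - f (p j)| := abs_sum_le_sum_abs _ _
    _ ≤ _ := sum_le_sum fun j hj => hf _ _ (hpos j (mem_range.1 hj))

theorem abs_sub_le_pathMetric (f : X → ℝ)
    (hf : ∀ x y, 0 < b x y → |f y - f x| ≤ stepLength D x y) {x y : X}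
    (hne : (pathLengths b D x y).Nonempty) : |f y - f x| ≤ pathMetric b D x y :=
  le_csInf hne fun _ => abs_sub_le_of_mem_pathLengths f hf

end PathMetric

namespace AntiTree

variable {s : ℕ → ℕ}

noncomputable def levelDeg (s : ℕ → ℕ) (k : ℕ) : ℝ :=
  (s (k + 1) : ℝ) + if k = 0 then 0 else (s (k - 1) : ℝ)

theorem hasSum_ite_level (m : ℕ) :
    HasSum (fun y : AntiTree s => if y.1 = m then (1 : ℝ) else 0) (s m) := by
  have : ∑ y ∈ univ.map (Function.Embedding.sigmaMk (β := fun k => Fin (s k)) m),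
      (if y.1 = m then (1 : ℝ) else 0) = s m := by
    rw [sum_map]
    simp
  rw [← this]
  refine hasSum_sum_of_ne_finset_zero ?_
  rintro ⟨k, i⟩ hy
  refine if_neg fun (hk : k = m) => hy ?_
  subst hk
  exact mem_map_of_mem _ (mem_univ i)

theorem wt_eq (x y : AntiTree s) :
    wt s x y = (if y.1 = x.1 + 1 then 1 else 0) + if y.1 + 1 = x.1 then 1 else 0 := by
  unfold wt
  split_ifs <;> (try norm_num) <;> omega

theorem Deg_eq (x : AntiTree s) : Deg s x = levelDeg s x.1 := by
  have hdown : HasSum (fun y : AntiTree s => if y.1 + 1 = x.1 then (1 : ℝ) else 0)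
      (if x.1 = 0 then 0 else s (x.1 - 1)) := by
    split_ifs with hx
    · simp [hx, hasSum_zero]
    · simpa [show ∀ k, k + 1 = x.1 ↔ k = x.1 - 1 by omega] using hasSum_ite_level (x.1 - 1)
  simp only [Deg, wt_eq]
  exact ((hasSum_ite_level (x.1 + 1)).add hdown).tsum_eq

theorem wt_comm (x y : AntiTree s) : wt s x y = wt s y x := by
  simp only [wt, or_comm]

theorem wt_pos_iff {x y : AntiTree s} : 0 < wt s x y ↔ x.1 + 1 = y.1 ∨ y.1 + 1 = x.1 := by
  unfold wt
  split_ifs with h <;> simp [h]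

/-- The length of the edges between `S_k` and `S_{k+1}` when `s` is monotone: the larger degree,
that of `S_{k+1}`, wins in the `min` of `pathMetric`. -/
noncomputable def edgeLength (s : ℕ → ℕ) (k : ℕ) : ℝ := √(1 / levelDeg s (k + 1))

noncomputable def rootDist (s : ℕ → ℕ) (n : ℕ) : ℝ := ∑ k ∈ range n, edgeLength s k

theorem edgeLength_nonneg (k : ℕ) : 0 ≤ edgeLength s k := Real.sqrt_nonneg _

theorem rootDist_zero : rootDist s 0 = 0 := sum_range_zero _

theorem rootDist_nonneg (n : ℕ) : 0 ≤ rootDist s n := sum_nonneg fun k _ => edgeLength_nonneg k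

theorem rootDist_succ (n : ℕ) : rootDist s (n + 1) = rootDist s n + edgeLength s n :=
  sum_range_succ _ _

theorem rootDist_mono : Monotone (rootDist s) :=
  monotone_nat_of_le_succ fun n => by
    rw [rootDist_succ]
    linarith [edgeLength_nonneg (s := s) n]

theorem rootDist_sub_eq_sum_Ico {a b : ℕ} (h : a ≤ b) :
    rootDist s b - rootDist s a = ∑ k ∈ Ico a b, edgeLength s k :=
  (sum_Ico_eq_sub _ h).symm

theorem levelDeg_mono (hmono : Monotone s) : Monotone (levelDeg s) := by
  refine monotone_nat_of_le_succ fun k => ?_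
  have hup : (s (k + 1) : ℝ) ≤ s (k + 1 + 1) := by exact_mod_cast hmono k.succ.le_succ
  have hdown : (if k = 0 then 0 else (s (k - 1) : ℝ)) ≤ s k := by
    split_ifs
    · positivity
    · exact_mod_cast hmono (k.sub_le 1)
  simp only [levelDeg, if_neg k.succ_ne_zero, Nat.add_sub_cancel]
  linarith

def levelFinset (s : ℕ → ℕ) (F : Finset ℕ) : Finset (AntiTree s) := F.sigma fun _ => univ

theorem coe_levelFinset (F : Finset ℕ) :
    (levelFinset s F : Set (AntiTree s)) = {y | y.1 ∈ F} := by
  ext y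
  exact mem_sigma.trans (and_iff_left (mem_univ _))

theorem ncard_setOf_level_mem (F : Finset ℕ) :
    {y : AntiTree s | y.1 ∈ F}.ncard = ∑ k ∈ F, s k := by
  rw [← coe_levelFinset, Set.ncard_coe_finset]
  exact (card_sigma _ _).trans (by simp)

theorem finite_setOf_level_mem (F : Finset ℕ) : {y : AntiTree s | y.1 ∈ F}.Finite :=
  coe_levelFinset (s := s) F ▸ finite_toSet _

theorem ncard_le_sum_of_level_mem {A : Set (AntiTree s)} {F : Finset ℕ}
    (h : ∀ y ∈ A, y.1 ∈ F) : (A.ncard : ℝ) ≤ ∑ k ∈ F, (s k : ℝ) := by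
  have := Set.ncard_le_ncard (t := {y : AntiTree s | y.1 ∈ F}) h (finite_setOf_level_mem F)
  exact_mod_cast this.trans_eq (ncard_setOf_level_mem F)

theorem sum_le_ncard_of_level_mem {A : Set (AntiTree s)} {F : Finset ℕ} (hA : A.Finite)
    (h : ∀ y : AntiTree s, y.1 ∈ F → y ∈ A) : ∑ k ∈ F, (s k : ℝ) ≤ A.ncard := by
  have := Set.ncard_le_ncard (s := {y : AntiTree s | y.1 ∈ F}) (fun y => h y) hA
  exact_mod_cast (ncard_setOf_level_mem F).symm.trans_le this

section Positive

variable (hs : ∀ k, 0 < s k)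
include hs

theorem one_le_levelDeg (k : ℕ) : 1 ≤ levelDeg s k := by
  have : (1 : ℝ) ≤ s (k + 1) := by exact_mod_cast hs (k + 1)
  have : (0 : ℝ) ≤ if k = 0 then 0 else (s (k - 1) : ℝ) := by positivity
  unfold levelDeg
  linarith

theorem edgeLength_le_one (k : ℕ) : edgeLength s k ≤ 1 :=
  Real.sqrt_le_one.2 ((div_le_one (by linarith [one_le_levelDeg hs (k + 1)])).2
    (one_le_levelDeg hs (k + 1)))

variable (hmono : Monotone s)
include hmono

theorem edgeLength_antitone : Antitone (edgeLength s) := fun k _ _ =>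
  Real.sqrt_le_sqrt (one_div_le_one_div_of_le (by linarith [one_le_levelDeg hs (k + 1)])
    (levelDeg_mono hmono (by omega)))

theorem stepLength_Deg_of_succ_eq {x y : AntiTree s} (h : x.1 + 1 = y.1) :
    stepLength (Deg s) x y = edgeLength s x.1 := by
  rw [stepLength, Deg_eq, Deg_eq, ← h, edgeLength, min_eq_right (one_div_le_one_div_of_le
    (by linarith [one_le_levelDeg hs x.1]) (levelDeg_mono hmono x.1.le_succ))]

theorem abs_rootDist_sub_eq_stepLength {x y : AntiTree s} (h : 0 < wt s x y) :
    |rootDist s y.1 - rootDist s x.1| = stepLength (Deg s) x y := by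
  rcases wt_pos_iff.1 h with h | h
  · rw [stepLength_Deg_of_succ_eq hs hmono h, ← h, rootDist_succ, add_sub_cancel_left,
      abs_of_nonneg (edgeLength_nonneg _)]
  · rw [stepLength, min_comm, ← stepLength, stepLength_Deg_of_succ_eq hs hmono h, ← h,
      rootDist_succ, sub_add_cancel_left, abs_neg, abs_of_nonneg (edgeLength_nonneg _)]

theorem rootDist_sub_mem_pathLengths {x y : AntiTree s} (h : x.1 < y.1) :
    rootDist s y.1 - rootDist s x.1 ∈ pathLengths (wt s) (Deg s) x y := by
  obtain ⟨m, hm⟩ := Nat.exists_eq_add_of_lt h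
  induction m generalizing x with
  | zero =>
    have hxy : x.1 + 1 = y.1 := hm.symm
    convert add_mem_pathLengths (wt_pos_iff.2 (.inl hxy)) (zero_mem_pathLengths (D := Deg s) y)
      using 1
    rw [add_zero, stepLength_Deg_of_succ_eq hs hmono hxy, ← hxy, rootDist_succ,
      add_sub_cancel_left]
  | succ m ih =>
    let z : AntiTree s := ⟨x.1 + 1, ⟨0, hs _⟩⟩
    have hxz : x.1 + 1 = z.1 := rfl
    have := add_mem_pathLengths (wt_pos_iff.2 (.inl hxz)) (ih (x := z) (by omega) (by omega))
    rw [stepLength_Deg_of_succ_eq hs hmono hxz, ← hxz, rootDist_succ] at this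
    convert this using 1
    ring

theorem rho_eq_abs_rootDist_sub {x y : AntiTree s} (h : x.1 ≠ y.1) :
    rho s x y = |rootDist s y.1 - rootDist s x.1| := by
  have hmem : |rootDist s y.1 - rootDist s x.1| ∈ pathLengths (wt s) (Deg s) x y := by
    rcases h.lt_or_gt with h | h
    · rw [abs_of_nonneg (sub_nonneg.2 (rootDist_mono h.le))]
      exact rootDist_sub_mem_pathLengths hs hmono h
    · rw [abs_sub_comm, abs_of_nonneg (sub_nonneg.2 (rootDist_mono h.le))]
      exact mem_pathLengths_comm wt_comm (rootDist_sub_mem_pathLengths hs hmono h)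
  exact (pathMetric_le hmem).antisymm <|
    abs_sub_le_pathMetric (fun z : AntiTree s => rootDist s z.1)
      (fun _ _ hxy => (abs_rootDist_sub_eq_stepLength hs hmono hxy).le) ⟨_, hmem⟩

theorem abs_rootDist_sub_le_rho (x y : AntiTree s) :
    |rootDist s y.1 - rootDist s x.1| ≤ rho s x y := by
  by_cases h : x.1 = y.1
  · rw [h, sub_self, abs_zero]
    exact pathMetric_nonneg x y
  · exact (rho_eq_abs_rootDist_sub hs hmono h).ge

theorem rho_eq_rootDist (h0 : s 0 = 1) {o : AntiTree s} (ho : o.1 = 0) (x : AntiTree s) :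
    rho s x o = rootDist s x.1 := by
  by_cases hx : x.1 = 0
  · obtain ⟨k, i⟩ := x
    obtain ⟨l, j⟩ := o
    obtain rfl : k = 0 := hx
    obtain rfl : l = 0 := ho
    obtain rfl : i = j := Fin.ext (by omega)
    exact (pathMetric_self _).trans rootDist_zero.symm
  · rw [rho_eq_abs_rootDist_sub hs hmono (by omega), ho, rootDist_zero, zero_sub, abs_neg,
      abs_of_nonneg (rootDist_nonneg _)]

theorem abs_rootDist_sub_le_of_mem_ball {x y : AntiTree s} {r : ℝ} (hy : y ∈ ball s x r) :
    |rootDist s y.1 - rootDist s x.1| ≤ r :=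
  (abs_rootDist_sub_le_rho hs hmono x y).trans hy

theorem sum_Ico_le_ncard_ball {x : AntiTree s} {r : ℝ} (hfin : (ball s x r).Finite) {j : ℕ}
    (hj : rootDist s (x.1 + j) - rootDist s x.1 ≤ r) :
    ∑ k ∈ Ico (x.1 + 1) (x.1 + 1 + j), (s k : ℝ) ≤ (ball s x r).ncard := by
  refine sum_le_ncard_of_level_mem hfin fun y hy => ?_
  obtain ⟨hy₁, hy₂⟩ := mem_Ico.1 hy
  change rho s x y ≤ r
  rw [rho_eq_abs_rootDist_sub hs hmono (by omega),
    abs_of_nonneg (sub_nonneg.2 (rootDist_mono (by omega)))]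
  linarith [rootDist_mono (s := s) (show y.1 ≤ x.1 + j by omega)]

theorem exists_sum_Ico_le_ncard_ball {x : AntiTree s} {r t : ℝ} (hr : 1 ≤ r) (ht : 0 ≤ t)
    (hfin : (ball s x r).Finite)
    (h : ∀ j : ℕ, (j : ℝ) ≤ t → rootDist s (x.1 + j) - rootDist s x.1 ≤ r) :
    ∃ j : ℕ, t / 2 ≤ j ∧
      ∑ k ∈ Ico (x.1 + 1) (x.1 + 1 + j), (s k : ℝ) ≤ (ball s x r).ncard := by
  -- `j = max 1 ⌊t⌋₊` works: the sphere above `x` is at distance `w_{|x|} ≤ 1 ≤ r` anyway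
  refine ⟨max 1 ⌊t⌋₊, ?_, sum_Ico_le_ncard_ball hs hmono hfin ?_⟩
  · rcases lt_or_ge t 2 with ht2 | ht2
    · exact le_trans (by linarith) (Nat.one_le_cast.2 (le_max_left _ _))
    · have := Nat.lt_floor_add_one t
      exact le_trans (by linarith) (Nat.cast_le.2 (le_max_right 1 ⌊t⌋₊))
  · rcases le_total ⌊t⌋₊ 1 with h1 | h1
    · rw [max_eq_left h1, rootDist_succ, add_sub_cancel_left]
      exact (edgeLength_le_one hs _).trans hr
    · rw [max_eq_right h1]
      exact h _ (Nat.floor_le ht)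

theorem rootDist_add_sub_le_rootDist (a j : ℕ) :
    rootDist s (a + j) - rootDist s a ≤ rootDist s j := by
  rw [rootDist_sub_eq_sum_Ico (by omega), sum_Ico_eq_sum_range, Nat.add_sub_cancel_left]
  exact sum_le_sum fun k _ => edgeLength_antitone hs hmono (by omega)

theorem rootDist_add_sub_le_mul (a j : ℕ) :
    rootDist s (a + j) - rootDist s a ≤ j * edgeLength s a := by
  rw [rootDist_sub_eq_sum_Ico (by omega)]
  simpa using sum_le_card_nsmul (Ico a (a + j)) _ _ fun k hk =>
    edgeLength_antitone hs hmono (mem_Ico.1 hk).1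

theorem mul_edgeLength_le_rootDist_sub {a b : ℕ} (h : a ≤ b) :
    ((b - a : ℕ) : ℝ) * edgeLength s b ≤ rootDist s b - rootDist s a := by
  rw [rootDist_sub_eq_sum_Ico h]
  simpa using card_nsmul_le_sum _ _ _ fun k hk =>
    edgeLength_antitone hs hmono (mem_Ico.1 hk).2.le

end Positive

end AntiTree

section GammaAntiTree

open AntiTree

variable {γ : ℝ}

theorem gammaSphere_zero : gammaSphere γ 0 = 1 := by
  simp [gammaSphere]

theorem gammaSphere_pos (hγ : 0 ≤ γ) (k : ℕ) : 0 < gammaSphere γ k :=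
  Nat.floor_pos.2 (Real.one_le_rpow (by linarith [k.cast_nonneg (α := ℝ)]) hγ)

theorem gammaSphere_mono (hγ : 0 ≤ γ) : Monotone (gammaSphere γ) := fun k l h =>
  Nat.floor_mono (Real.rpow_le_rpow (by positivity) (by gcongr) hγ)

theorem gammaSphere_le (k : ℕ) : (gammaSphere γ k : ℝ) ≤ ((k : ℝ) + 1) ^ γ :=
  Nat.floor_le (by positivity)

theorem rpow_le_two_mul_gammaSphere (hγ : 0 ≤ γ) (k : ℕ) :
    ((k : ℝ) + 1) ^ γ ≤ 2 * gammaSphere γ k := by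
  have h1 : (1 : ℝ) ≤ gammaSphere γ k := by exact_mod_cast gammaSphere_pos hγ k
  have h2 : ((k : ℝ) + 1) ^ γ < gammaSphere γ k + 1 := Nat.lt_floor_add_one _
  linarith

theorem levelDeg_gammaSphere_succ (k : ℕ) :
    levelDeg (gammaSphere γ) (k + 1) = gammaSphere γ (k + 2) + gammaSphere γ k := by
  simp [levelDeg]

theorem rpow_le_two_mul_levelDeg_gammaSphere (hγ : 0 ≤ γ) (k : ℕ) :
    ((k : ℝ) + 1) ^ γ ≤ 2 * levelDeg (gammaSphere γ) (k + 1) := by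
  have h1 : ((k : ℝ) + 1) ^ γ ≤ (((k + 2 : ℕ) : ℝ) + 1) ^ γ :=
    Real.rpow_le_rpow (by positivity) (by push_cast; linarith) hγ
  have h2 := rpow_le_two_mul_gammaSphere hγ (k + 2)
  rw [levelDeg_gammaSphere_succ]
  linarith [(Nat.cast_nonneg (gammaSphere γ k) : (0 : ℝ) ≤ _)]

theorem levelDeg_gammaSphere_le (hγ0 : 0 ≤ γ) (hγ2 : γ < 2) (k : ℕ) :
    levelDeg (gammaSphere γ) (k + 1) ≤ 10 * ((k : ℝ) + 1) ^ γ := by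
  have h3 : (3 : ℝ) ^ γ ≤ 9 :=
    (Real.rpow_le_rpow_of_exponent_le (by norm_num) hγ2.le).trans_eq (by norm_num)
  have h1 : (gammaSphere γ (k + 2) : ℝ) ≤ 3 ^ γ * ((k : ℝ) + 1) ^ γ := by
    rw [← Real.mul_rpow (by norm_num) (by positivity)]
    exact (gammaSphere_le _).trans (Real.rpow_le_rpow (by positivity) (by push_cast; linarith) hγ0)
  have h2 := gammaSphere_le (γ := γ) k
  have h4 : (0 : ℝ) ≤ ((k : ℝ) + 1) ^ γ := by positivity
  rw [levelDeg_gammaSphere_succ]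
  nlinarith

theorem edgeLength_mul_rpow_half (s : ℕ → ℕ) (k : ℕ) :
    edgeLength s k * ((k : ℝ) + 1) ^ (γ / 2) =
      √(((k : ℝ) + 1) ^ γ / levelDeg s (k + 1)) := by
  have : ((k : ℝ) + 1) ^ (γ / 2) = √(((k : ℝ) + 1) ^ γ) := by
    rw [Real.sqrt_eq_rpow, ← Real.rpow_mul (by positivity)]
    ring_nf
  rw [edgeLength, this, ← Real.sqrt_mul' _ (by positivity), one_div_mul_eq_div]

theorem edgeLength_gammaSphere_mul_le (hγ : 0 ≤ γ) (k : ℕ) :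
    edgeLength (gammaSphere γ) k * ((k : ℝ) + 1) ^ (γ / 2) ≤ 2 := by
  have hD : 0 < levelDeg (gammaSphere γ) (k + 1) := by
    linarith [one_le_levelDeg (gammaSphere_pos hγ) (k + 1)]
  rw [edgeLength_mul_rpow_half, Real.sqrt_le_left zero_le_two, div_le_iff₀ hD]
  linarith [rpow_le_two_mul_levelDeg_gammaSphere hγ k]

theorem one_le_five_mul_edgeLength_gammaSphere_mul (hγ0 : 0 ≤ γ) (hγ2 : γ < 2) (k : ℕ) :
    1 ≤ 5 * (edgeLength (gammaSphere γ) k * ((k : ℝ) + 1) ^ (γ / 2)) := by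
  have hD : 0 < levelDeg (gammaSphere γ) (k + 1) := by
    linarith [one_le_levelDeg (gammaSphere_pos hγ0) (k + 1)]
  have : (1 / 5 : ℝ) ≤ edgeLength (gammaSphere γ) k * ((k : ℝ) + 1) ^ (γ / 2) := by
    rw [edgeLength_mul_rpow_half, Real.le_sqrt (by norm_num) (by positivity), le_div_iff₀ hD]
    linarith [levelDeg_gammaSphere_le hγ0 hγ2 k]
  linarith

theorem rootDist_gammaSphere_le (hγ0 : 0 ≤ γ) (hγ2 : γ < 2) (n : ℕ) :
    rootDist (gammaSphere γ) n ≤ 2 / (1 - γ / 2) * (n : ℝ) ^ (1 - γ / 2) := by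
  have hedge (k : ℕ) :
      edgeLength (gammaSphere γ) k ≤ 2 * ((k : ℝ) + 1) ^ (1 - γ / 2 - 1) := by
    rw [show 1 - γ / 2 - 1 = -(γ / 2) by ring, Real.rpow_neg (by positivity), ← div_eq_mul_inv,
      le_div_iff₀ (by positivity)]
    exact edgeLength_gammaSphere_mul_le hγ0 k
  calc rootDist (gammaSphere γ) n ≤ ∑ k ∈ range n, 2 * ((k : ℝ) + 1) ^ (1 - γ / 2 - 1) :=
        sum_le_sum fun k _ => hedge k
    _ ≤ 2 * ((n : ℝ) ^ (1 - γ / 2) / (1 - γ / 2)) := by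
        rw [← mul_sum]
        gcongr
        exact sum_range_rpow_sub_one_le (by linarith) (by linarith) n
    _ = _ := by ring

theorem sub_le_five_mul_rpow_mul_abs_rootDist_sub (hγ0 : 0 ≤ γ) (hγ2 : γ < 2) (a b : ℕ) :
    ((b - a : ℕ) : ℝ) ≤
      5 * ((b : ℝ) + 1) ^ (γ / 2) *
        |rootDist (gammaSphere γ) b - rootDist (gammaSphere γ) a| := by
  rcases le_or_gt a b with hab | hab
  · have hsub := mul_edgeLength_le_rootDist_sub (gammaSphere_pos hγ0) (gammaSphere_mono hγ0) hab
    have hedge := one_le_five_mul_edgeLength_gammaSphere_mul hγ0 hγ2 b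
    have hba : (0 : ℝ) ≤ ((b - a : ℕ) : ℝ) := Nat.cast_nonneg _
    have hb : (0 : ℝ) ≤ ((b : ℝ) + 1) ^ (γ / 2) := by positivity
    calc ((b - a : ℕ) : ℝ) ≤ ((b - a : ℕ) : ℝ) *
          (5 * (edgeLength (gammaSphere γ) b * ((b : ℝ) + 1) ^ (γ / 2))) :=
          le_mul_of_one_le_right hba hedge
      _ = 5 * ((b : ℝ) + 1) ^ (γ / 2) *
            (((b - a : ℕ) : ℝ) * edgeLength (gammaSphere γ) b) := by ring
      _ ≤ _ := by gcongr; exact hsub.trans (le_abs_self _)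
  · rw [Nat.sub_eq_zero_of_le hab.le, Nat.cast_zero]
    positivity

theorem rpow_le_ten_mul_rootDist_gammaSphere (hγ0 : 0 ≤ γ) (hγ2 : γ < 2) (n : ℕ) :
    (n : ℝ) ^ (1 - γ / 2) ≤ 10 * rootDist (gammaSphere γ) n := by
  rcases Nat.eq_zero_or_pos n with rfl | hn
  · rw [Nat.cast_zero, Real.zero_rpow (by linarith), rootDist_zero, mul_zero]
  have hn1 : (1 : ℝ) ≤ n := by exact_mod_cast hn
  have hwidth := sub_le_five_mul_rpow_mul_abs_rootDist_sub hγ0 hγ2 0 n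
  rw [Nat.sub_zero, rootDist_zero, sub_zero, abs_of_nonneg (rootDist_nonneg n)] at hwidth
  have hsucc : ((n : ℝ) + 1) ^ (γ / 2) ≤ 2 * (n : ℝ) ^ (γ / 2) := by
    calc ((n : ℝ) + 1) ^ (γ / 2) ≤ (2 * n) ^ (γ / 2) :=
          Real.rpow_le_rpow (by positivity) (by linarith) (by linarith)
      _ = 2 ^ (γ / 2) * (n : ℝ) ^ (γ / 2) := Real.mul_rpow (by norm_num) (by positivity)
      _ ≤ 2 * (n : ℝ) ^ (γ / 2) := by
          gcongr
          exact (Real.rpow_le_rpow_of_exponent_le (by norm_num) (by linarith)).trans_eq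
            (Real.rpow_one 2)
  have hsplit : (n : ℝ) = (n : ℝ) ^ (1 - γ / 2) * (n : ℝ) ^ (γ / 2) := by
    rw [← Real.rpow_add (by positivity), sub_add_cancel, Real.rpow_one]
  have hpos : 0 < (n : ℝ) ^ (γ / 2) := by positivity
  nlinarith [rootDist_nonneg (s := gammaSphere γ) n]

theorem rpow_le_sixteen_mul_sum_range_gammaSphere (hγ0 : 0 ≤ γ) (hγ2 : γ < 2) (n : ℕ) :
    (n : ℝ) ^ (γ + 1) ≤ 16 * ∑ k ∈ range n, (gammaSphere γ k : ℝ) := by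
  have hterm : ∀ k ∈ Ico (n / 2) n, ((n : ℝ) / 2) ^ γ / 2 ≤ gammaSphere γ k := by
    intro k hk
    have : (n : ℝ) / 2 ≤ k + 1 := by
      have : n ≤ 2 * (k + 1) := by have := (mem_Ico.1 hk).1; omega
      have : (n : ℝ) ≤ 2 * (k + 1) := by exact_mod_cast this
      linarith
    linarith [rpow_le_two_mul_gammaSphere hγ0 k, Real.rpow_le_rpow (by positivity) this hγ0]
  have hcard : (n : ℝ) / 2 ≤ #(Ico (n / 2) n) := by
    rw [Nat.card_Ico]
    have : n ≤ 2 * (n - n / 2) := by omega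
    have : (n : ℝ) ≤ 2 * ((n - n / 2 : ℕ) : ℝ) := by exact_mod_cast this
    linarith
  have h8 : (2 : ℝ) ^ (γ + 1) ≤ 8 := two_rpow_le_eight (by linarith)
  calc (n : ℝ) ^ (γ + 1) = 2 ^ (γ + 1) * ((n : ℝ) / 2) ^ (γ + 1) := by
        rw [Real.div_rpow (by positivity) (by norm_num), mul_div_cancel₀ _ (by positivity)]
    _ ≤ 8 * ((n : ℝ) / 2 * ((n : ℝ) / 2) ^ γ) := by
        rw [Real.rpow_add_one' (x := (n : ℝ) / 2) (by positivity) (by linarith),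
          mul_comm (((n : ℝ) / 2) ^ γ)]
        gcongr
    _ ≤ 16 * (#(Ico (n / 2) n) * (((n : ℝ) / 2) ^ γ / 2)) := by
        have : (0 : ℝ) ≤ ((n : ℝ) / 2) ^ γ := by positivity
        nlinarith
    _ ≤ 16 * ∑ k ∈ Ico (n / 2) n, (gammaSphere γ k : ℝ) := by
        gcongr
        simpa using card_nsmul_le_sum _ _ _ hterm
    _ ≤ 16 * ∑ k ∈ range n, (gammaSphere γ k : ℝ) := by
        gcongr
        exact fun k hk => mem_range.2 (mem_Ico.1 hk).2

noncomputable def volumeExponent (γ : ℝ) : ℝ := 2 * (γ + 1) / (2 - γ)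

theorem one_sub_half_mul_volumeExponent (hγ2 : γ < 2) :
    (1 - γ / 2) * volumeExponent γ = γ + 1 := by
  have : 2 - γ ≠ 0 := by linarith
  rw [volumeExponent]
  field_simp

theorem one_le_volumeExponent (hγ0 : 0 ≤ γ) (hγ2 : γ < 2) : 1 ≤ volumeExponent γ := by
  rw [volumeExponent, le_div_iff₀ (by linarith)]
  linarith

theorem rpow_three_mul_half_eq (hγ2 : γ < 2) {L : ℝ} (hL : 0 ≤ L) :
    L ^ (3 * γ / 2) = (L ^ (1 - γ / 2)) ^ (volumeExponent γ - 1) := by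
  rw [← Real.rpow_mul hL, mul_sub, one_sub_half_mul_volumeExponent hγ2]
  ring_nf

theorem rpow_gamma_add_one_eq (hγ2 : γ < 2) {t : ℝ} (ht : 0 ≤ t) :
    t ^ (γ + 1) = (t ^ (1 - γ / 2)) ^ volumeExponent γ := by
  rw [← Real.rpow_mul ht, one_sub_half_mul_volumeExponent hγ2]

theorem rootDist_gammaSphere_rpow_le (hγ0 : 0 ≤ γ) (hγ2 : γ < 2) (n : ℕ) :
    rootDist (gammaSphere γ) n ^ (volumeExponent γ - 1) ≤
      (2 / (1 - γ / 2)) ^ (volumeExponent γ - 1) * ((n : ℝ) + 1) ^ (3 * γ / 2) := by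
  have hp : 0 < 1 - γ / 2 := by linarith
  rw [rpow_three_mul_half_eq hγ2 (by positivity),
    ← Real.mul_rpow (by positivity) (by positivity)]
  refine Real.rpow_le_rpow (rootDist_nonneg _) ((rootDist_gammaSphere_le hγ0 hγ2 n).trans ?_)
    (by linarith [one_le_volumeExponent hγ0 hγ2])
  gcongr
  linarith

theorem level_le_of_mem_ball_gammaSphere (hγ0 : 0 ≤ γ) (hγ2 : γ < 2)
    {x y : AntiTree (gammaSphere γ)} {r : ℝ} (hy : y ∈ ball (gammaSphere γ) x r) :
    (y.1 : ℝ) ≤ (10 * (rootDist (gammaSphere γ) x.1 + r)) ^ (1 - γ / 2)⁻¹ := by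
  have habs := abs_rootDist_sub_le_of_mem_ball (gammaSphere_pos hγ0) (gammaSphere_mono hγ0) hy
  have hp : 0 < 1 - γ / 2 := by linarith
  have hR := rootDist_nonneg (s := gammaSphere γ) x.1
  have hr : 0 ≤ r := (abs_nonneg _).trans habs
  rw [← Real.rpow_le_rpow_iff (by positivity) (Real.rpow_nonneg (by linarith) _) hp,
    Real.rpow_inv_rpow (by linarith) hp.ne']
  linarith [rpow_le_ten_mul_rootDist_gammaSphere hγ0 hγ2 y.1, (abs_le.1 habs).2]

theorem finite_ball_gammaSphere (hγ0 : 0 ≤ γ) (hγ2 : γ < 2) (x : AntiTree (gammaSphere γ))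
    (r : ℝ) : (ball (gammaSphere γ) x r).Finite :=
  (finite_setOf_level_mem (Iic ⌊_⌋₊)).subset fun _ hy =>
    mem_Iic.2 (Nat.le_floor (level_le_of_mem_ball_gammaSphere hγ0 hγ2 hy))

theorem ncard_le_of_forall_level_le (hγ : 0 ≤ γ) {A : Set (AntiTree (gammaSphere γ))}
    {a m : ℕ} {L : ℝ} (hL : 0 ≤ L)
    (h : ∀ y ∈ A, (y.1 : ℝ) ≤ L ∧ y.1 - a ≤ m ∧ a - y.1 ≤ m) :
    (A.ncard : ℝ) ≤ (2 * m + 1) * (L + 1) ^ γ := by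
  let F := (Icc (a - m) (a + m)).filter fun k : ℕ => (k : ℝ) ≤ L
  have hcard : (#F : ℝ) ≤ 2 * m + 1 := by
    have : #F ≤ 2 * m + 1 := (card_filter_le _ _).trans (by rw [Nat.card_Icc]; omega)
    exact_mod_cast this
  have hterm : ∀ k ∈ F, (gammaSphere γ k : ℝ) ≤ (L + 1) ^ γ := fun k hk =>
    (gammaSphere_le k).trans
      (Real.rpow_le_rpow (by positivity) (by linarith [(mem_filter.1 hk).2]) hγ)
  calc (A.ncard : ℝ) ≤ ∑ k ∈ F, (gammaSphere γ k : ℝ) := by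
        refine ncard_le_sum_of_level_mem fun y hy => ?_
        obtain ⟨hyL, h₁, h₂⟩ := h y hy
        exact mem_filter.2 ⟨mem_Icc.2 ⟨by omega, by omega⟩, hyL⟩
    _ ≤ #F * (L + 1) ^ γ := by simpa using sum_le_card_nsmul F _ _ hterm
    _ ≤ (2 * m + 1) * (L + 1) ^ γ := by gcongr

theorem ncard_ball_gammaSphere_le_of_level_le (hγ0 : 0 ≤ γ) (hγ2 : γ < 2)
    {x : AntiTree (gammaSphere γ)} {r L : ℝ} (hr : 0 ≤ r) (hL : 0 ≤ L)
    (hlevel : ∀ y ∈ ball (gammaSphere γ) x r, (y.1 : ℝ) ≤ L) :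
    ((ball (gammaSphere γ) x r).ncard : ℝ) ≤
      (10 * (L + 1) ^ (γ / 2) * r + 1) * (L + 1) ^ γ := by
  have hx : x ∈ ball (gammaSphere γ) x r := (pathMetric_self x).trans_le hr
  set Δ := 5 * (L + 1) ^ (γ / 2) * r
  have hwidth (u v : ℕ) (hu : (u : ℝ) ≤ L)
      (huv : |rootDist (gammaSphere γ) u - rootDist (gammaSphere γ) v| ≤ r) :
      u - v ≤ ⌊Δ⌋₊ :=
    Nat.le_floor <| (sub_le_five_mul_rpow_mul_abs_rootDist_sub hγ0 hγ2 v u).trans <| by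
      show _ ≤ 5 * (L + 1) ^ (γ / 2) * r
      gcongr
  have hcount := ncard_le_of_forall_level_le hγ0 (a := x.1) (m := ⌊Δ⌋₊) hL
    fun y (hy : y ∈ ball (gammaSphere γ) x r) => by
      have habs := abs_rootDist_sub_le_of_mem_ball (gammaSphere_pos hγ0) (gammaSphere_mono hγ0) hy
      exact ⟨hlevel y hy, hwidth _ _ (hlevel y hy) habs,
        hwidth _ _ (hlevel x hx) (by rwa [abs_sub_comm])⟩
  refine hcount.trans (mul_le_mul_of_nonneg_right ?_ (by positivity))
  linarith [Nat.floor_le (show 0 ≤ Δ by positivity)]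

theorem ncard_ball_gammaSphere_le (hγ0 : 0 ≤ γ) (hγ2 : γ < 2) :
    ∃ C, 0 < C ∧ ∀ (x : AntiTree (gammaSphere γ)) (r : ℝ), 1 ≤ r →
      ((ball (gammaSphere γ) x r).ncard : ℝ) ≤
        C * (r * max (rootDist (gammaSphere γ) x.1) r ^ (volumeExponent γ - 1)) := by
  refine ⟨120 * 20 ^ (volumeExponent γ - 1), by positivity, fun x r hr => ?_⟩
  have hp : 0 < 1 - γ / 2 := by linarith
  set R := rootDist (gammaSphere γ) x.1
  set M := max R r
  set L := (20 * M) ^ (1 - γ / 2)⁻¹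
  have hM : 1 ≤ M := hr.trans (le_max_right _ _)
  have hR : 0 ≤ R := rootDist_nonneg _
  have hL : 1 ≤ L := Real.one_le_rpow (by linarith) (inv_nonneg.2 hp.le)
  have hlevel : ∀ y ∈ ball (gammaSphere γ) x r, (y.1 : ℝ) ≤ L := fun y hy =>
    (level_le_of_mem_ball_gammaSphere hγ0 hγ2 hy).trans <| Real.rpow_le_rpow (by linarith)
      (by linarith [le_max_left R r, le_max_right R r]) (inv_nonneg.2 hp.le)
  have hL₁ : 1 ≤ (L + 1) ^ (γ / 2) := Real.one_le_rpow (by linarith) (by linarith)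
  have h8 : (L + 1) ^ (3 * γ / 2) ≤ 8 * L ^ (3 * γ / 2) :=
    calc (L + 1) ^ (3 * γ / 2) ≤ (2 * L) ^ (3 * γ / 2) :=
          Real.rpow_le_rpow (by linarith) (by linarith) (by linarith)
      _ = 2 ^ (3 * γ / 2) * L ^ (3 * γ / 2) := Real.mul_rpow (by norm_num) (by linarith)
      _ ≤ 8 * L ^ (3 * γ / 2) := by
          gcongr
          exact two_rpow_le_eight (by linarith)
  calc ((ball (gammaSphere γ) x r).ncard : ℝ)
      ≤ (10 * (L + 1) ^ (γ / 2) * r + 1) * (L + 1) ^ γ :=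
        ncard_ball_gammaSphere_le_of_level_le hγ0 hγ2 (by linarith) (by linarith) hlevel
    _ ≤ 15 * r * ((L + 1) ^ (γ / 2) * (L + 1) ^ γ) := by
        have : 1 ≤ (L + 1) ^ (γ / 2) * r := one_le_mul_of_one_le_of_one_le hL₁ hr
        have : 0 ≤ (L + 1) ^ γ := by positivity
        nlinarith
    _ = 15 * r * (L + 1) ^ (3 * γ / 2) := by
        rw [show 3 * γ / 2 = γ / 2 + γ by ring, Real.rpow_add (by linarith)]
    _ ≤ 15 * r * (8 * L ^ (3 * γ / 2)) := by gcongr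
    _ = 120 * 20 ^ (volumeExponent γ - 1) * (r * M ^ (volumeExponent γ - 1)) := by
        rw [rpow_three_mul_half_eq hγ2 (by linarith), Real.rpow_inv_rpow (by linarith) hp.ne',
          Real.mul_rpow (by norm_num) (by linarith)]
        ring

theorem le_ncard_ball_gammaSphere_rpow (hγ0 : 0 ≤ γ) (hγ2 : γ < 2) :
    ∃ c, 0 < c ∧ ∀ (x : AntiTree (gammaSphere γ)) (r : ℝ), 1 ≤ r →
      c * r ^ volumeExponent γ ≤ (ball (gammaSphere γ) x r).ncard := by
  have hs := gammaSphere_pos hγ0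
  have hmono := gammaSphere_mono hγ0
  have hp : 0 < 1 - γ / 2 := by linarith
  set C := 2 / (1 - γ / 2)
  have hC : 0 < C := by positivity
  refine ⟨(128 * C ^ volumeExponent γ)⁻¹, by positivity, fun x r hr => ?_⟩
  set t := (r / C) ^ (1 - γ / 2)⁻¹
  have ht : 0 ≤ t := by positivity
  have htp : t ^ (1 - γ / 2) = r / C := Real.rpow_inv_rpow (by positivity) hp.ne'
  obtain ⟨j, hjt, hj⟩ := exists_sum_Ico_le_ncard_ball hs hmono hr ht
    (finite_ball_gammaSphere hγ0 hγ2 x r) fun j hj =>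
      calc rootDist (gammaSphere γ) (x.1 + j) - rootDist (gammaSphere γ) x.1
          ≤ rootDist (gammaSphere γ) j :=
            rootDist_add_sub_le_rootDist hs hmono _ _
        _ ≤ C * (j : ℝ) ^ (1 - γ / 2) := rootDist_gammaSphere_le hγ0 hγ2 j
        _ ≤ C * t ^ (1 - γ / 2) := by gcongr
        _ = r := by rw [htp]; field_simp
  have h8 : (2 : ℝ) ^ (γ + 1) ≤ 8 := two_rpow_le_eight (by linarith)
  calc (128 * C ^ volumeExponent γ)⁻¹ * r ^ volumeExponent γ = t ^ (γ + 1) / 128 := by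
        rw [rpow_gamma_add_one_eq hγ2 ht, htp, Real.div_rpow (by linarith) hC.le]
        field_simp
    _ = 2 ^ (γ + 1) * (t / 2) ^ (γ + 1) / 128 := by
        rw [Real.div_rpow ht (by norm_num), mul_div_cancel₀ _ (by positivity)]
    _ ≤ (j : ℝ) ^ (γ + 1) / 16 := by
        have : (t / 2) ^ (γ + 1) ≤ (j : ℝ) ^ (γ + 1) :=
          Real.rpow_le_rpow (by positivity) hjt (by linarith)
        nlinarith [Real.rpow_nonneg (by positivity : 0 ≤ t / 2) (γ + 1)]
    _ ≤ ∑ k ∈ range j, (gammaSphere γ k : ℝ) := by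
        linarith [rpow_le_sixteen_mul_sum_range_gammaSphere hγ0 hγ2 j]
    _ ≤ ∑ k ∈ Ico (x.1 + 1) (x.1 + 1 + j), (gammaSphere γ k : ℝ) :=
        sum_range_le_sum_Ico_add (Nat.mono_cast.comp hmono) _ _
    _ ≤ _ := hj

theorem le_ncard_ball_gammaSphere_mul_rootDist (hγ0 : 0 ≤ γ) (hγ2 : γ < 2) :
    ∃ c, 0 < c ∧ ∀ (x : AntiTree (gammaSphere γ)) (r : ℝ), 1 ≤ r →
      c * (r * rootDist (gammaSphere γ) x.1 ^ (volumeExponent γ - 1)) ≤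
        (ball (gammaSphere γ) x r).ncard := by
  have hs := gammaSphere_pos hγ0
  have hmono := gammaSphere_mono hγ0
  have hp : 0 < 1 - γ / 2 := by linarith
  set C := 2 / (1 - γ / 2)
  have hC : 0 < C := by positivity
  refine ⟨(8 * C ^ (volumeExponent γ - 1))⁻¹, by positivity, fun x r hr => ?_⟩
  set a := x.1
  set u := ((a : ℝ) + 1) ^ (γ / 2)
  have hu : 0 < u := by positivity
  have hedge : edgeLength (gammaSphere γ) a * u ≤ 2 := edgeLength_gammaSphere_mul_le hγ0 a
  obtain ⟨j, hjt, hj⟩ := exists_sum_Ico_le_ncard_ball hs hmono hr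
    (by positivity : 0 ≤ r * u / 2) (finite_ball_gammaSphere hγ0 hγ2 x r) fun j hj => by
      have := rootDist_add_sub_le_mul hs hmono a j
      have : (j : ℝ) * (edgeLength (gammaSphere γ) a * u) ≤ r * u := by nlinarith
      nlinarith
  have hsphere : ∀ k ∈ Ico (a + 1) (a + 1 + j), ((a : ℝ) + 1) ^ γ / 2 ≤ gammaSphere γ k :=
    fun k hk => by
      have hak : (a : ℝ) + 1 ≤ k := by exact_mod_cast (mem_Ico.1 hk).1
      linarith [rpow_le_two_mul_gammaSphere hγ0 k,
        Real.rpow_le_rpow (by positivity) (by linarith : (a : ℝ) + 1 ≤ k + 1) hγ0]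
  have hR := rootDist_gammaSphere_rpow_le hγ0 hγ2 a
  have hsplit : ((a : ℝ) + 1) ^ (3 * γ / 2) = u * ((a : ℝ) + 1) ^ γ := by
    rw [show 3 * γ / 2 = γ / 2 + γ by ring, Real.rpow_add (by positivity)]
  calc (8 * C ^ (volumeExponent γ - 1))⁻¹ *
          (r * rootDist (gammaSphere γ) a ^ (volumeExponent γ - 1))
      ≤ (8 * C ^ (volumeExponent γ - 1))⁻¹ *
          (r * (C ^ (volumeExponent γ - 1) * ((a : ℝ) + 1) ^ (3 * γ / 2))) := by gcongr
    _ = r * u / 2 / 2 * (((a : ℝ) + 1) ^ γ / 2) := by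
        rw [hsplit]
        field_simp
        ring
    _ ≤ j * (((a : ℝ) + 1) ^ γ / 2) := by gcongr
    _ ≤ ∑ k ∈ Ico (a + 1) (a + 1 + j), (gammaSphere γ k : ℝ) := by
        simpa using card_nsmul_le_sum _ _ _ hsphere
    _ ≤ _ := hj

theorem ncard_ball_gammaSphere_asymp (hγ0 : 0 ≤ γ) (hγ2 : γ < 2) :
    ∃ C, 1 ≤ C ∧ ∀ (x : AntiTree (gammaSphere γ)) (r : ℝ), 1 ≤ r →
      C⁻¹ * (r * max (rootDist (gammaSphere γ) x.1) r ^ (volumeExponent γ - 1)) ≤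
          (ball (gammaSphere γ) x r).ncard ∧
        ((ball (gammaSphere γ) x r).ncard : ℝ) ≤
          C * (r * max (rootDist (gammaSphere γ) x.1) r ^ (volumeExponent γ - 1)) := by
  obtain ⟨C, -, hup⟩ := ncard_ball_gammaSphere_le hγ0 hγ2
  obtain ⟨c₁, hc₁, hlow₁⟩ := le_ncard_ball_gammaSphere_rpow hγ0 hγ2
  obtain ⟨c₂, hc₂, hlow₂⟩ := le_ncard_ball_gammaSphere_mul_rootDist hγ0 hγ2
  refine ⟨max (max 1 C) (min c₁ c₂)⁻¹, le_max_of_le_left (le_max_left _ _),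
    fun x r hr => ?_⟩
  set R := rootDist (gammaSphere γ) x.1
  have hR : 0 ≤ R := rootDist_nonneg _
  have hlow : min c₁ c₂ * (r * max R r ^ (volumeExponent γ - 1)) ≤
      (ball (gammaSphere γ) x r).ncard := by
    rcases le_total R r with h | h
    · rw [max_eq_right h, mul_rpow_sub_one_eq_rpow (by linarith)]
      exact (mul_le_mul_of_nonneg_right (min_le_left _ _) (by positivity)).trans (hlow₁ x r hr)
    · rw [max_eq_left h]
      exact (mul_le_mul_of_nonneg_right (min_le_right _ _) (by positivity)).trans (hlow₂ x r hr)
  exact inv_mul_le_and_le_mul_of_le (lt_min hc₁ hc₂) (by positivity) (le_max_right _ _)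
    (le_max_of_le_left (le_max_right _ _)) hlow (hup x r hr)

end GammaAntiTree

/-- **Polynomial volume growth of anti-trees.**
For `γ ∈ [0,2)`, `d := 2(γ+1)/(2-γ)`, and the `γ`-anti-tree with root `o`, counting
measure `m ≡ 1` and intrinsic degree path metric `ρ`, there is `C ≥ 1` such that for all
vertices `x` (with `r_x := ρ(x,o)`):
(i) `C⁻¹ r^d ≤ #B_x(r) ≤ C r^d` for all `r ≥ max(1, r_x)`, and
(ii) `C⁻¹ r r_x^{d-1} ≤ #B_x(r) ≤ C r r_x^{d-1}` for all `1 ≤ r ≤ r_x`. -/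
theorem gammaAntiTree_volume (γ : ℝ) (hγ0 : 0 ≤ γ) (hγ2 : γ < 2)
    (o : AntiTree (gammaSphere γ)) (ho : o.1 = 0) :
    ∃ C : ℝ, 1 ≤ C ∧ ∀ x : AntiTree (gammaSphere γ),
      (∀ r : ℝ, max 1 (AntiTree.rho (gammaSphere γ) x o) ≤ r →
        C⁻¹ * r ^ (2 * (γ + 1) / (2 - γ)) ≤ ((AntiTree.ball (gammaSphere γ) x r).ncard : ℝ) ∧
        ((AntiTree.ball (gammaSphere γ) x r).ncard : ℝ) ≤ C * r ^ (2 * (γ + 1) / (2 - γ))) ∧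
      (∀ r : ℝ, 1 ≤ r → r ≤ AntiTree.rho (gammaSphere γ) x o →
        C⁻¹ * (r * AntiTree.rho (gammaSphere γ) x o ^ (2 * (γ + 1) / (2 - γ) - 1)) ≤
            ((AntiTree.ball (gammaSphere γ) x r).ncard : ℝ) ∧
        ((AntiTree.ball (gammaSphere γ) x r).ncard : ℝ) ≤
            C * (r * AntiTree.rho (gammaSphere γ) x o ^ (2 * (γ + 1) / (2 - γ) - 1))) := by
  obtain ⟨C, hC, hball⟩ := ncard_ball_gammaSphere_asymp hγ0 hγ2
  have hρ := AntiTree.rho_eq_rootDist (gammaSphere_pos hγ0) (gammaSphere_mono hγ0)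
    gammaSphere_zero ho
  refine ⟨C, hC, fun x => ⟨fun r hr => ?_, fun r hr hrρ => ?_⟩⟩
  · rw [hρ] at hr
    have hr₁ : 1 ≤ r := (le_max_left _ _).trans hr
    have := hball x r hr₁
    rwa [max_eq_right ((le_max_right _ _).trans hr), mul_rpow_sub_one_eq_rpow (by linarith)] at this
  · rw [hρ] at hrρ ⊢
    have := hball x r hr
    rwa [max_eq_left hrρ] at this
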